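/- arXiv:2302.01998 — 2 statements merged into one kernel-verified Lean document; each statement's English description precedes it below -/
import Mathlib

section
/- If A has an eigenvalue with strictly positive real part and Φ is positive definite, then trace(e^{A τ} Φ e^{Aᴴ τ}) → ∞ as τ → ∞. -/
/-!
Let `Aᴴ v = μ̄ v` with `v ≠ 0` and `0 < Re μ`. Then `e^{τAᴴ} v = e^{τμ̄} v`, so the quadratic form
of `N(τ) = e^{τA} Φ e^{τAᴴ}` at `v` is `e^{2τ Re μ} v*Φv`, with `v*Φv > 0`. For a positive
semidefinite `N = BᴴB`, Cauchy–Schwarz applied row by row gives `v*Nv ≤ ‖v‖² tr N`, hence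
`Re tr N(τ) ≥ e^{2τ Re μ} v*Φv / ‖v‖² → ∞`.
-/

open scoped Matrix ComplexOrder

namespace Matrix

variable {m n 𝕜 : Type*} [Fintype m] [Fintype n] [RCLike 𝕜]

theorem re_star_dotProduct_self (x : n → 𝕜) : RCLike.re (star x ⬝ᵥ x) = ∑ i, ‖x i‖ ^ 2 := by
  simp [dotProduct, RCLike.conj_mul]

theorem re_trace_conjTranspose_mul_self (B : Matrix m n 𝕜) :
    RCLike.re (Bᴴ * B).trace = ∑ i, ∑ j, ‖B i j‖ ^ 2 := by
  rw [← star_vec_dotProduct_vec, re_star_dotProduct_self, Fintype.sum_prod_type, Finset.sum_comm]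
  rfl

theorem sum_norm_sq_mulVec_le {α : Type*} [SeminormedRing α] (B : Matrix m n α) (v : n → α) :
    ∑ i, ‖(B *ᵥ v) i‖ ^ 2 ≤ (∑ i, ∑ j, ‖B i j‖ ^ 2) * ∑ j, ‖v j‖ ^ 2 := by
  rw [Finset.sum_mul]
  refine Finset.sum_le_sum fun i _ => ?_
  calc ‖(B *ᵥ v) i‖ ^ 2 ≤ (∑ j, ‖B i j‖ * ‖v j‖) ^ 2 := by
        gcongr
        exact (norm_sum_le _ _).trans (Finset.sum_le_sum fun j _ => norm_mul_le _ _)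
    _ ≤ _ := Finset.sum_mul_sq_le_sq_mul_sq _ _ _

open scoped MatrixOrder in
theorem PosSemidef.re_dotProduct_mulVec_le {N : Matrix n n 𝕜} (hN : N.PosSemidef) (v : n → 𝕜) :
    RCLike.re (star v ⬝ᵥ N *ᵥ v) ≤ (∑ j, ‖v j‖ ^ 2) * RCLike.re N.trace := by
  classical
  obtain ⟨B, rfl⟩ := CStarAlgebra.nonneg_iff_eq_star_mul_self.mp hN.nonneg
  rw [star_eq_conjTranspose, ← mulVec_mulVec, dotProduct_mulVec, ← star_mulVec,
    re_star_dotProduct_self, re_trace_conjTranspose_mul_self, mul_comm]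
  exact sum_norm_sq_mulVec_le B v

theorem re_star_dotProduct_mul_mul_conjTranspose_mulVec {M Φ : Matrix n n 𝕜} {c : 𝕜}
    {v : n → 𝕜} (h : Mᴴ *ᵥ v = c • v) :
    RCLike.re (star v ⬝ᵥ (M * Φ * Mᴴ) *ᵥ v) = ‖c‖ ^ 2 * RCLike.re (star v ⬝ᵥ Φ *ᵥ v) := by
  have hstar : star v ᵥ* M = star (c • v) := by rw [← h, star_mulVec, conjTranspose_conjTranspose]
  rw [← mulVec_mulVec, ← mulVec_mulVec, h, dotProduct_mulVec, hstar, mulVec_smul, star_smul,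
    smul_dotProduct, dotProduct_smul, smul_smul, smul_eq_mul, RCLike.star_def, RCLike.conj_mul]
  simp

variable [DecidableEq n]

theorem exists_conjTranspose_mulVec_eq_star_smul {K : Type*} [Field K] [StarRing K]
    {A : Matrix n n K} {μ : K} (hμ : μ ∈ spectrum K A) :
    ∃ v ≠ 0, Aᴴ *ᵥ v = star μ • v := by
  have hμ' : star μ ∈ spectrum K Aᴴ := by
    rw [← star_eq_conjTranspose, spectrum.map_star]
    simpa using hμ
  rw [← spectrum_toLin', ← Module.End.hasEigenvalue_iff_mem_spectrum] at hμ'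
  obtain ⟨v, hv⟩ := hμ'.exists_hasEigenvector
  exact ⟨v, hv.2, hv.apply_eq_smul⟩

open scoped Norms.Operator in
theorem exp_mulVec_of_mulVec_eq_smul {B : Matrix n n 𝕜} {μ : 𝕜} {v : n → 𝕜}
    (h : B *ᵥ v = μ • v) :
    NormedSpace.exp B *ᵥ v = NormedSpace.exp μ • v := by
  have hpow (k : ℕ) : B ^ k *ᵥ v = μ ^ k • v := by
    induction k with
    | zero => simp
    | succ k ih => rw [pow_succ', ← mulVec_mulVec, ih, mulVec_smul, h, smul_smul, pow_succ]
  have hB := (NormedSpace.exp_series_hasSum_exp' (𝕂 := 𝕜) B).map (mulVec.addMonoidHomLeft v)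
    (continuous_id.matrix_mulVec continuous_const)
  have hμ := (NormedSpace.exp_series_hasSum_exp' (𝕂 := 𝕜) μ).smul_const v
  refine hB.unique ?_
  convert hμ using 2 with k
  change ((k.factorial : 𝕜)⁻¹ • B ^ k) *ᵥ v = _
  rw [smul_mulVec, hpow, smul_smul, smul_eq_mul]

theorem exp_smul_conjTranspose_mulVec {A : Matrix n n ℂ} {μ : ℂ} {v : n → ℂ}
    (hv : Aᴴ *ᵥ v = star μ • v) (τ : ℝ) :
    (NormedSpace.exp (τ • A))ᴴ *ᵥ v = Complex.exp (τ * star μ) • v := by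
  rw [← exp_conjTranspose, conjTranspose_smul, star_trivial, Complex.exp_eq_exp_ℂ]
  refine exp_mulVec_of_mulVec_eq_smul ?_
  rw [← Complex.coe_smul, smul_mulVec, hv, smul_smul]

theorem exp_mul_re_sq_mul_le_re_trace {A Φ : Matrix n n ℂ} (hΦ : Φ.PosSemidef) {μ : ℂ}
    {v : n → ℂ} (hv : Aᴴ *ᵥ v = star μ • v) (τ : ℝ) :
    Real.exp (τ * μ.re) ^ 2 * (star v ⬝ᵥ Φ *ᵥ v).re ≤
      (∑ j, ‖v j‖ ^ 2) * (NormedSpace.exp (τ • A) * Φ * NormedSpace.exp (τ • Aᴴ)).trace.re := by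
  have h := (hΦ.mul_mul_conjTranspose_same (NormedSpace.exp (τ • A))).re_dotProduct_mulVec_le v
  rw [re_star_dotProduct_mul_mul_conjTranspose_mulVec (exp_smul_conjTranspose_mulVec hv τ),
    Complex.norm_exp, ← exp_conjTranspose, conjTranspose_smul, star_trivial τ] at h
  simpa using h

end Matrix

open scoped Matrix ComplexOrder in
/-- If A has an eigenvalue with positive real part and Φ is positive definite, then
trace(e^{Aτ} Φ e^{Aᴴτ}) → ∞ as τ → ∞. -/
theorem stmt6 {n : ℕ} (A Φ : Matrix (Fin n) (Fin n) ℂ)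
    (hunstab : ∃ μ : ℂ, μ ∈ spectrum ℂ A ∧ 0 < Complex.re μ)
    (hΦ : Φ.PosDef) :
    Filter.Tendsto
      (fun τ : ℝ => (Matrix.trace (NormedSpace.exp (τ • A) * Φ * NormedSpace.exp (τ • Aᴴ))).re)
      Filter.atTop Filter.atTop := by
  obtain ⟨μ, hμ, hre⟩ := hunstab
  obtain ⟨v, hv0, hv⟩ := Matrix.exists_conjTranspose_mulVec_eq_star_smul hμ
  have hq : 0 < (star v ⬝ᵥ Φ *ᵥ v).re := hΦ.re_dotProduct_pos hv0
  have hs : 0 < ∑ j, ‖v j‖ ^ 2 := by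
    obtain ⟨j, hj⟩ := Function.ne_iff.mp hv0
    exact Finset.sum_pos' (fun _ _ => by positivity) ⟨j, Finset.mem_univ j, by positivity⟩
  have hlower (τ : ℝ) : (star v ⬝ᵥ Φ *ᵥ v).re / (∑ j, ‖v j‖ ^ 2) * Real.exp (τ * μ.re) ^ 2 ≤
      (Matrix.trace (NormedSpace.exp (τ • A) * Φ * NormedSpace.exp (τ • Aᴴ))).re := by
    rw [div_mul_eq_mul_div, div_le_iff₀ hs, mul_comm, mul_comm _ (∑ j, _)]
    exact Matrix.exp_mul_re_sq_mul_le_re_trace hΦ.posSemidef hv τ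
  refine Filter.tendsto_atTop_mono hlower ?_
  exact ((Filter.tendsto_pow_atTop two_ne_zero).comp (Real.tendsto_exp_atTop.comp
    (Filter.tendsto_id.atTop_mul_const hre))).const_mul_atTop (div_pos hq hs)
end

section
/- For an unstable scalar system with a > 0 and D > 0, the instantaneous MSE m(τ) = (D/(2a))(e^{2aτ} − 1) grows without bound, and for transmission time Δ and error probability ε ∈ [0,1), the lower-bound time-average MSE E[L]/E[T] with geometric retransmissions is finite if and only if ε e^{2aΔ} < 1. -/
/-!
The mean-square error `m τ = c (e^{kτ} - 1)` integrates in closed form, and weighting the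
integral over `[Δ, (n + 2) Δ]` by `(1 - ε) εⁿ` gives a multiple of `(ε e^{kΔ})ⁿ` minus a
term of the form `(β + γ n) εⁿ`. The latter is summable whenever `|ε| < 1`, so the series
converges exactly when the geometric series with ratio `ε e^{kΔ}` does.
-/

open Real Filter

lemma tendsto_mul_exp_mul_sub_one_atTop {c k : ℝ} (hc : 0 < c) (hk : 0 < k) :
    Tendsto (fun τ => c * (exp (k * τ) - 1)) atTop atTop := by
  refine Tendsto.const_mul_atTop hc (tendsto_atTop_add_const_right _ (-1) ?_)
  exact tendsto_exp_atTop.comp (tendsto_id.const_mul_atTop hk)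

lemma integral_exp_mul_sub_one {k : ℝ} (hk : k ≠ 0) (A B : ℝ) :
    ∫ x in A..B, (exp (k * x) - 1) = (exp (k * B) - exp (k * A)) / k - (B - A) := by
  have hint : IntervalIntegrable (fun x => exp (k * x)) MeasureTheory.volume A B :=
    (continuous_exp.comp (continuous_const_mul k)).intervalIntegrable A B
  rw [intervalIntegral.integral_sub hint intervalIntegrable_const,
    intervalIntegral.integral_comp_mul_left exp hk, integral_exp, intervalIntegral.integral_const,
    smul_eq_mul, smul_eq_mul, mul_one, inv_mul_eq_div]

lemma summable_affine_mul_geometric {R : Type*} [NormedRing R] [HasSummableGeomSeries R]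
    {r : R} (hr : ‖r‖ < 1) (b c : R) :
    Summable fun n : ℕ => (b + c * n) * r ^ n := by
  refine (((summable_geometric_of_norm_lt_one hr).mul_left b).add
    ((summable_pow_mul_geometric_of_norm_lt_one 1 hr).mul_left c)).congr fun n => ?_
  simp only [pow_one, add_mul, mul_assoc]

lemma mul_geometric_mul_integral_exp_mul_sub_one (c k Δ ε : ℝ) (hk : k ≠ 0) (n : ℕ) :
    (1 - ε) * ε ^ n * ∫ τ in Δ..(((n : ℝ) + 2) * Δ), c * (exp (k * τ) - 1)
      = (1 - ε) * c * exp (k * Δ) ^ 2 / k * (ε * exp (k * Δ)) ^ n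
        - ((1 - ε) * c * (exp (k * Δ) / k + Δ) + (1 - ε) * c * Δ * n) * ε ^ n := by
  have hexp : exp (k * (((n : ℝ) + 2) * Δ)) = exp (k * Δ) ^ (n + 2) := by
    rw [← exp_nat_mul]
    push_cast
    ring_nf
  rw [intervalIntegral.integral_const_mul, integral_exp_mul_sub_one hk, hexp]
  field_simp
  ring

theorem summable_mul_geometric_mul_integral_exp_mul_sub_one_iff {c k Δ ε : ℝ} (hc : c ≠ 0)
    (hk : k ≠ 0) (hε : |ε| < 1) :
    (Summable fun n : ℕ =>
        (1 - ε) * ε ^ n * ∫ τ in Δ..(((n : ℝ) + 2) * Δ), c * (exp (k * τ) - 1))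
      ↔ |ε * exp (k * Δ)| < 1 := by
  have hε1 : 1 - ε ≠ 0 := sub_ne_zero.mpr (abs_lt.mp hε).2.ne'
  have hα : (1 - ε) * c * exp (k * Δ) ^ 2 / k ≠ 0 := by positivity
  rw [summable_iff_of_summable_sub (g := fun n => (1 - ε) * c * exp (k * Δ) ^ 2 / k *
      (ε * exp (k * Δ)) ^ n), summable_mul_left_iff hα, summable_geometric_iff_norm_lt_one,
    Real.norm_eq_abs]
  simp only [mul_geometric_mul_integral_exp_mul_sub_one c k Δ ε hk, sub_sub_cancel_left]
  exact (summable_affine_mul_geometric (r := ε) hε _ _).neg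

theorem stmt14_general (a D Δ ε : ℝ) (ha : 0 < a) (hD : 0 < D)
    (hε0 : 0 ≤ ε) (hε1 : ε < 1)
    (m : ℝ → ℝ) (hm : ∀ τ, m τ = (D / (2 * a)) * (Real.exp (2 * a * τ) - 1)) :
    Filter.Tendsto m Filter.atTop Filter.atTop ∧
    ((Summable fun n : ℕ =>
        (1 - ε) * ε ^ n * ∫ τ in Δ..(((n : ℝ) + 2) * Δ), m τ)
      ↔ ε * Real.exp (2 * a * Δ) < 1) := by
  obtain rfl : m = fun τ => D / (2 * a) * (exp (2 * a * τ) - 1) := funext hm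
  have h2a : 0 < 2 * a := by positivity
  refine ⟨tendsto_mul_exp_mul_sub_one_atTop (by positivity) h2a, ?_⟩
  rw [summable_mul_geometric_mul_integral_exp_mul_sub_one_iff (by positivity) h2a.ne'
      (by rwa [abs_of_nonneg hε0]), abs_of_nonneg (by positivity)]

/-- Unstable scalar system (a > 0): m(τ) = (D/(2a))(e^{2aτ}−1) grows without bound, and
the lower-bound time-average MSE with geometric retransmissions is finite iff
ε e^{2aΔ} < 1. -/
theorem stmt14 (a D Δ ε : ℝ) (ha : 0 < a) (hD : 0 < D) (hΔ : 0 < Δ)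
    (hε0 : 0 ≤ ε) (hε1 : ε < 1)
    (m : ℝ → ℝ) (hm : ∀ τ, m τ = (D / (2 * a)) * (Real.exp (2 * a * τ) - 1)) :
    Filter.Tendsto m Filter.atTop Filter.atTop ∧
    ((Summable fun n : ℕ =>
        (1 - ε) * ε ^ n * ∫ τ in Δ..(((n : ℝ) + 2) * Δ), m τ)
      ↔ ε * Real.exp (2 * a * Δ) < 1) :=
  stmt14_general a D Δ ε ha hD hε0 hε1 m hm
end
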